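/- The polynomials C₂' = 2Σ_{i,k} t_{ik}t_{ik} and C₃' = Σ_{i,k,l} t_{ik}t_{kl}t_{li} (sums over 1..3, with t_{ik} = t_{ki} and t₃₃ = −t₁₁ − t₂₂) are invariants of the rotor Lie algebra g = so(3) ⋉ ℝ⁵. -/

import Mathlib

open MvPolynomial

/-- Levi-Civita symbol on indices `0,1,2` (with values in `ℂ`). -/
noncomputable def lc (a b c : ℕ) : ℂ :=
  (((b : ℂ) - a) * ((c : ℂ) - a) * ((c : ℂ) - b)) / 2

/-- Dual coordinates `l₁,l₂,l₃` (variables `0,1,2` of `ℂ[l₁,l₂,l₃,t₁₁,t₂₂,t₁₂,t₁₃,t₂₃]`). -/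
noncomputable def lv (a : Fin 3) : MvPolynomial (Fin 8) ℂ := X ⟨a.1, by omega⟩

/-- Dual coordinates `t_{jk}` with the conventions `t_{jk} = t_{kj}` and
`t₃₃ = −t₁₁ − t₂₂`; here `t₁₁,t₂₂,t₁₂,t₁₃,t₂₃` are the variables `3,4,5,6,7`. -/
noncomputable def tv (a b : Fin 3) : MvPolynomial (Fin 8) ℂ :=
  if a = 0 ∧ b = 0 then X 3
  else if a = 1 ∧ b = 1 then X 4
  else if a = 2 ∧ b = 2 then - X 3 - X 4
  else if (a = 0 ∧ b = 1) ∨ (a = 1 ∧ b = 0) then X 5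
  else if (a = 0 ∧ b = 2) ∨ (a = 2 ∧ b = 0) then X 6
  else X 7

/-- The symmetric index pair `(j,k)` corresponding to the basis elements
`T₁₁,T₂₂,T₁₂,T₁₃,T₂₃` (indices `3,…,7` of the rotor algebra basis). -/
def tpair : Fin 5 → Fin 3 × Fin 3 := ![(0, 0), (1, 1), (0, 1), (0, 2), (1, 2)]

/-- `rotorBk i j = Σ_k C_{ij}^k x_k`: the bracket `[X_i, X_j]` of the rotor Lie algebra
`so(3) ⋉ ℝ⁵` (basis `L₁,L₂,L₃,T₁₁,T₂₂,T₁₂,T₁₃,T₂₃`, nonzero brackets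
`[L_j,L_k] = iε_{jkl}L_l`, `[L_j,T_{kl}] = iε_{jkm}T_{lm} + iε_{jlm}T_{km}`,
`[T_{jk},T_{lm}] = 0`) written in the dual coordinates. -/
noncomputable def rotorBk (i j : Fin 8) : MvPolynomial (Fin 8) ℂ :=
  if hi : i.1 < 3 then
    if hj : j.1 < 3 then
      ∑ m : Fin 3, MvPolynomial.C (Complex.I * lc i.1 j.1 m.1) * lv m
    else
      let kl := tpair ⟨j.1 - 3, by have := j.isLt; omega⟩;
      ∑ m : Fin 3,
        (MvPolynomial.C (Complex.I * lc i.1 kl.1.1 m.1) * tv kl.2 m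
          + MvPolynomial.C (Complex.I * lc i.1 kl.2.1 m.1) * tv kl.1 m)
  else
    if hj : j.1 < 3 then
      let kl := tpair ⟨i.1 - 3, by have := i.isLt; omega⟩;
      - ∑ m : Fin 3,
          (MvPolynomial.C (Complex.I * lc j.1 kl.1.1 m.1) * tv kl.2 m
            + MvPolynomial.C (Complex.I * lc j.1 kl.2.1 m.1) * tv kl.1 m)
    else 0

/-- `F` is an invariant of the Lie algebra with structure constants `C_{ij}^k`
(here encoded through `bk i j = Σ_k C_{ij}^k x_k`):
for every `i`, `Σ_{j,k} C_{ij}^k x_k ∂F/∂x_j = Σ_j bk i j ∂F/∂x_j = 0`. -/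
def IsLieInvariant (bk : Fin 8 → Fin 8 → MvPolynomial (Fin 8) ℂ)
    (F : MvPolynomial (Fin 8) ℂ) : Prop :=
  ∀ i : Fin 8, ∑ j : Fin 8, bk i j * pderiv j F = 0


private noncomputable abbrev CI : MvPolynomial (Fin 8) ℂ := MvPolynomial.C Complex.I

private lemma valrw : ((3:Fin 8):ℕ) = 3 ∧ ((4:Fin 8):ℕ) = 4 ∧ ((5:Fin 8):ℕ) = 5 ∧
    ((6:Fin 8):ℕ) = 6 ∧ ((7:Fin 8):ℕ) = 7 := ⟨rfl, rfl, rfl, rfl, rfl⟩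

private lemma tvv : tv 0 0 = X 3 ∧
    tv 0 1 = X 5 ∧
    tv 0 2 = X 6 ∧
    tv 1 0 = X 5 ∧
    tv 1 1 = X 4 ∧
    tv 1 2 = X 7 ∧
    tv 2 0 = X 6 ∧
    tv 2 1 = X 7 ∧
    tv 2 2 = - X 3 - X 4 :=
  ⟨rfl, rfl, rfl, rfl, rfl, rfl, rfl, rfl, rfl⟩

private lemma bk03 : rotorBk 0 3 = 0 := by
  simp only [rotorBk, Fin.isValue, Fin.val_zero, Fin.val_one, Fin.val_two, valrw.1, valrw.2.1,
    valrw.2.2.1, valrw.2.2.2.1, valrw.2.2.2.2]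
  norm_num [tpair, Fin.sum_univ_three, tvv, lc, CI,
    show ((2:Fin 3):ℕ) = 2 from rfl, show ((1:Fin 3):ℕ) = 1 from rfl,
    show ((0:Fin 3):ℕ) = 0 from rfl]
  try ring

private lemma bk04 : rotorBk 0 4 = CI * (2*X 7) := by
  simp only [rotorBk, Fin.isValue, Fin.val_zero, Fin.val_one, Fin.val_two, valrw.1, valrw.2.1,
    valrw.2.2.1, valrw.2.2.2.1, valrw.2.2.2.2]
  norm_num [tpair, Fin.sum_univ_three, tvv, lc, CI,
    show ((2:Fin 3):ℕ) = 2 from rfl, show ((1:Fin 3):ℕ) = 1 from rfl,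
    show ((0:Fin 3):ℕ) = 0 from rfl]
  try ring

private lemma bk05 : rotorBk 0 5 = CI * X 6 := by
  simp only [rotorBk, Fin.isValue, Fin.val_zero, Fin.val_one, Fin.val_two, valrw.1, valrw.2.1,
    valrw.2.2.1, valrw.2.2.2.1, valrw.2.2.2.2]
  norm_num [tpair, Fin.sum_univ_three, tvv, lc, CI,
    show ((2:Fin 3):ℕ) = 2 from rfl, show ((1:Fin 3):ℕ) = 1 from rfl,
    show ((0:Fin 3):ℕ) = 0 from rfl]
  try ring

private lemma bk06 : rotorBk 0 6 = CI * (-X 5) := by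
  simp only [rotorBk, Fin.isValue, Fin.val_zero, Fin.val_one, Fin.val_two, valrw.1, valrw.2.1,
    valrw.2.2.1, valrw.2.2.2.1, valrw.2.2.2.2]
  norm_num [tpair, Fin.sum_univ_three, tvv, lc, CI,
    show ((2:Fin 3):ℕ) = 2 from rfl, show ((1:Fin 3):ℕ) = 1 from rfl,
    show ((0:Fin 3):ℕ) = 0 from rfl]
  try ring

private lemma bk07 : rotorBk 0 7 = CI * (-(2*X 4) - X 3) := by
  simp only [rotorBk, Fin.isValue, Fin.val_zero, Fin.val_one, Fin.val_two, valrw.1, valrw.2.1,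
    valrw.2.2.1, valrw.2.2.2.1, valrw.2.2.2.2]
  norm_num [tpair, Fin.sum_univ_three, tvv, lc, CI,
    show ((2:Fin 3):ℕ) = 2 from rfl, show ((1:Fin 3):ℕ) = 1 from rfl,
    show ((0:Fin 3):ℕ) = 0 from rfl]
  try ring

private lemma bk13 : rotorBk 1 3 = CI * (-(2*X 6)) := by
  simp only [rotorBk, Fin.isValue, Fin.val_zero, Fin.val_one, Fin.val_two, valrw.1, valrw.2.1,
    valrw.2.2.1, valrw.2.2.2.1, valrw.2.2.2.2]
  norm_num [tpair, Fin.sum_univ_three, tvv, lc, CI,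
    show ((2:Fin 3):ℕ) = 2 from rfl, show ((1:Fin 3):ℕ) = 1 from rfl,
    show ((0:Fin 3):ℕ) = 0 from rfl]
  try ring

private lemma bk14 : rotorBk 1 4 = 0 := by
  simp only [rotorBk, Fin.isValue, Fin.val_zero, Fin.val_one, Fin.val_two, valrw.1, valrw.2.1,
    valrw.2.2.1, valrw.2.2.2.1, valrw.2.2.2.2]
  norm_num [tpair, Fin.sum_univ_three, tvv, lc, CI,
    show ((2:Fin 3):ℕ) = 2 from rfl, show ((1:Fin 3):ℕ) = 1 from rfl,
    show ((0:Fin 3):ℕ) = 0 from rfl]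
  try ring

private lemma bk15 : rotorBk 1 5 = CI * (-X 7) := by
  simp only [rotorBk, Fin.isValue, Fin.val_zero, Fin.val_one, Fin.val_two, valrw.1, valrw.2.1,
    valrw.2.2.1, valrw.2.2.2.1, valrw.2.2.2.2]
  norm_num [tpair, Fin.sum_univ_three, tvv, lc, CI,
    show ((2:Fin 3):ℕ) = 2 from rfl, show ((1:Fin 3):ℕ) = 1 from rfl,
    show ((0:Fin 3):ℕ) = 0 from rfl]
  try ring

private lemma bk16 : rotorBk 1 6 = CI * (X 4 + 2*X 3) := by
  simp only [rotorBk, Fin.isValue, Fin.val_zero, Fin.val_one, Fin.val_two, valrw.1, valrw.2.1,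
    valrw.2.2.1, valrw.2.2.2.1, valrw.2.2.2.2]
  norm_num [tpair, Fin.sum_univ_three, tvv, lc, CI,
    show ((2:Fin 3):ℕ) = 2 from rfl, show ((1:Fin 3):ℕ) = 1 from rfl,
    show ((0:Fin 3):ℕ) = 0 from rfl]
  try ring

private lemma bk17 : rotorBk 1 7 = CI * X 5 := by
  simp only [rotorBk, Fin.isValue, Fin.val_zero, Fin.val_one, Fin.val_two, valrw.1, valrw.2.1,
    valrw.2.2.1, valrw.2.2.2.1, valrw.2.2.2.2]
  norm_num [tpair, Fin.sum_univ_three, tvv, lc, CI,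
    show ((2:Fin 3):ℕ) = 2 from rfl, show ((1:Fin 3):ℕ) = 1 from rfl,
    show ((0:Fin 3):ℕ) = 0 from rfl]
  try ring

private lemma bk23 : rotorBk 2 3 = CI * (2*X 5) := by
  simp only [rotorBk, Fin.isValue, Fin.val_zero, Fin.val_one, Fin.val_two, valrw.1, valrw.2.1,
    valrw.2.2.1, valrw.2.2.2.1, valrw.2.2.2.2]
  norm_num [tpair, Fin.sum_univ_three, tvv, lc, CI,
    show ((2:Fin 3):ℕ) = 2 from rfl, show ((1:Fin 3):ℕ) = 1 from rfl,
    show ((0:Fin 3):ℕ) = 0 from rfl]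
  try ring

private lemma bk24 : rotorBk 2 4 = CI * (-(2*X 5)) := by
  simp only [rotorBk, Fin.isValue, Fin.val_zero, Fin.val_one, Fin.val_two, valrw.1, valrw.2.1,
    valrw.2.2.1, valrw.2.2.2.1, valrw.2.2.2.2]
  norm_num [tpair, Fin.sum_univ_three, tvv, lc, CI,
    show ((2:Fin 3):ℕ) = 2 from rfl, show ((1:Fin 3):ℕ) = 1 from rfl,
    show ((0:Fin 3):ℕ) = 0 from rfl]
  try ring

private lemma bk25 : rotorBk 2 5 = CI * (X 4 - X 3) := by
  simp only [rotorBk, Fin.isValue, Fin.val_zero, Fin.val_one, Fin.val_two, valrw.1, valrw.2.1,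
    valrw.2.2.1, valrw.2.2.2.1, valrw.2.2.2.2]
  norm_num [tpair, Fin.sum_univ_three, tvv, lc, CI,
    show ((2:Fin 3):ℕ) = 2 from rfl, show ((1:Fin 3):ℕ) = 1 from rfl,
    show ((0:Fin 3):ℕ) = 0 from rfl]
  try ring

private lemma bk26 : rotorBk 2 6 = CI * X 7 := by
  simp only [rotorBk, Fin.isValue, Fin.val_zero, Fin.val_one, Fin.val_two, valrw.1, valrw.2.1,
    valrw.2.2.1, valrw.2.2.2.1, valrw.2.2.2.2]
  norm_num [tpair, Fin.sum_univ_three, tvv, lc, CI,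
    show ((2:Fin 3):ℕ) = 2 from rfl, show ((1:Fin 3):ℕ) = 1 from rfl,
    show ((0:Fin 3):ℕ) = 0 from rfl]
  try ring

private lemma bk27 : rotorBk 2 7 = CI * (-X 6) := by
  simp only [rotorBk, Fin.isValue, Fin.val_zero, Fin.val_one, Fin.val_two, valrw.1, valrw.2.1,
    valrw.2.2.1, valrw.2.2.2.1, valrw.2.2.2.2]
  norm_num [tpair, Fin.sum_univ_three, tvv, lc, CI,
    show ((2:Fin 3):ℕ) = 2 from rfl, show ((1:Fin 3):ℕ) = 1 from rfl,
    show ((0:Fin 3):ℕ) = 0 from rfl]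
  try ring

private lemma bkT (i j : Fin 8) (hi : 3 ≤ i.1) (hj : 3 ≤ j.1) : rotorBk i j = 0 := by
  rw [rotorBk, dif_neg (by omega), dif_neg (by omega)]

private noncomputable def P2 : MvPolynomial (Fin 8) ℂ :=
  4*X 7^2 + 4*X 6^2 + 4*X 5^2 + 4*X 4^2 + 4*X 3*X 4 + 4*X 3^2

private noncomputable def P3 : MvPolynomial (Fin 8) ℂ :=
  6*X 5*X 6*X 7 - 3*X 4*X 6^2 + 3*X 4*X 5^2 - 3*X 3*X 7^2 + 3*X 3*X 5^2
    - 3*X 3*X 4^2 - 3*X 3^2*X 4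

private lemma F2eq : (2 * ∑ i : Fin 3, ∑ k : Fin 3, tv i k * tv i k : MvPolynomial (Fin 8) ℂ) =
    P2 := by
  rw [P2]
  simp only [Fin.sum_univ_three, tv]
  norm_num [Fin.ext_iff]
  ring

private lemma F3eq : (∑ i : Fin 3, ∑ k : Fin 3, ∑ l : Fin 3, tv i k * tv k l * tv l i :
    MvPolynomial (Fin 8) ℂ) = P3 := by
  rw [P3]
  simp only [Fin.sum_univ_three, tv]
  norm_num [Fin.ext_iff]
  ring


private lemma pd_ofNat (j : Fin 8) (n : ℕ) [n.AtLeastTwo] :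
    pderiv j (OfNat.ofNat n : MvPolynomial (Fin 8) ℂ) = 0 := by
  rw [← map_ofNat (C : ℂ →+* MvPolynomial (Fin 8) ℂ) n, pderiv_C]

private lemma pdn3 (j : Fin 8) : pderiv j (3 : MvPolynomial (Fin 8) ℂ) = 0 := pd_ofNat j 3
private lemma pdn4 (j : Fin 8) : pderiv j (4 : MvPolynomial (Fin 8) ℂ) = 0 := pd_ofNat j 4
private lemma pdn6 (j : Fin 8) : pderiv j (6 : MvPolynomial (Fin 8) ℂ) = 0 := pd_ofNat j 6

private lemma pd2_0 : pderiv (0 : Fin 8) P2 = 0 := by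
  simp [P2, pdn3, pdn4, pdn6, pderiv_mul, pderiv_pow, pderiv_X, Pi.single_apply]
  

private lemma pd2_1 : pderiv (1 : Fin 8) P2 = 0 := by
  simp [P2, pdn3, pdn4, pdn6, pderiv_mul, pderiv_pow, pderiv_X, Pi.single_apply]
  

private lemma pd2_2 : pderiv (2 : Fin 8) P2 = 0 := by
  simp [P2, pdn3, pdn4, pdn6, pderiv_mul, pderiv_pow, pderiv_X, Pi.single_apply]
  

private lemma pd2_3 : pderiv (3 : Fin 8) P2 = 4*X 4 + 8*X 3 := by
  simp [P2, pdn3, pdn4, pdn6, pderiv_mul, pderiv_pow, pderiv_X, Pi.single_apply]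
  ring

private lemma pd2_4 : pderiv (4 : Fin 8) P2 = 8*X 4 + 4*X 3 := by
  simp [P2, pdn3, pdn4, pdn6, pderiv_mul, pderiv_pow, pderiv_X, Pi.single_apply]
  ring

private lemma pd2_5 : pderiv (5 : Fin 8) P2 = 8*X 5 := by
  simp [P2, pdn3, pdn4, pdn6, pderiv_mul, pderiv_pow, pderiv_X, Pi.single_apply]
  ring

private lemma pd2_6 : pderiv (6 : Fin 8) P2 = 8*X 6 := by
  simp [P2, pdn3, pdn4, pdn6, pderiv_mul, pderiv_pow, pderiv_X, Pi.single_apply]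
  ring

private lemma pd2_7 : pderiv (7 : Fin 8) P2 = 8*X 7 := by
  simp [P2, pdn3, pdn4, pdn6, pderiv_mul, pderiv_pow, pderiv_X, Pi.single_apply]
  ring

private lemma pd3_0 : pderiv (0 : Fin 8) P3 = 0 := by
  simp [P3, pdn3, pdn4, pdn6, pderiv_mul, pderiv_pow, pderiv_X, Pi.single_apply]
  

private lemma pd3_1 : pderiv (1 : Fin 8) P3 = 0 := by
  simp [P3, pdn3, pdn4, pdn6, pderiv_mul, pderiv_pow, pderiv_X, Pi.single_apply]
  

private lemma pd3_2 : pderiv (2 : Fin 8) P3 = 0 := by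
  simp [P3, pdn3, pdn4, pdn6, pderiv_mul, pderiv_pow, pderiv_X, Pi.single_apply]
  

private lemma pd3_3 : pderiv (3 : Fin 8) P3 = -(3*X 7^2) + 3*X 5^2 - 3*X 4^2 - 6*X 3*X 4 := by
  simp [P3, pdn3, pdn4, pdn6, pderiv_mul, pderiv_pow, pderiv_X, Pi.single_apply]
  ring

private lemma pd3_4 : pderiv (4 : Fin 8) P3 = -(3*X 6^2) + 3*X 5^2 - 6*X 3*X 4 - 3*X 3^2 := by
  simp [P3, pdn3, pdn4, pdn6, pderiv_mul, pderiv_pow, pderiv_X, Pi.single_apply]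
  ring

private lemma pd3_5 : pderiv (5 : Fin 8) P3 = 6*X 6*X 7 + 6*X 4*X 5 + 6*X 3*X 5 := by
  simp [P3, pdn3, pdn4, pdn6, pderiv_mul, pderiv_pow, pderiv_X, Pi.single_apply]
  ring

private lemma pd3_6 : pderiv (6 : Fin 8) P3 = 6*X 5*X 7 - 6*X 4*X 6 := by
  simp [P3, pdn3, pdn4, pdn6, pderiv_mul, pderiv_pow, pderiv_X, Pi.single_apply]
  ring

private lemma pd3_7 : pderiv (7 : Fin 8) P3 = 6*X 5*X 6 - 6*X 3*X 7 := by
  simp [P3, pdn3, pdn4, pdn6, pderiv_mul, pderiv_pow, pderiv_X, Pi.single_apply]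
  ring

private lemma rowT (i : Fin 8) (hi : 3 ≤ i.1) (F : MvPolynomial (Fin 8) ℂ)
    (hF : ∀ j : Fin 8, j.1 < 3 → pderiv j F = 0) :
    ∑ j : Fin 8, rotorBk i j * pderiv j F = 0 := by
  apply Finset.sum_eq_zero
  intro j _
  by_cases hj : j.1 < 3
  · rw [hF j hj, mul_zero]
  · rw [bkT i j hi (by omega), zero_mul]

private lemma pd2_low (j : Fin 8) (hj : j.1 < 3) : pderiv j P2 = 0 := by
  fin_cases j
  · exact pd2_0
  · exact pd2_1
  · exact pd2_2
  all_goals exact absurd hj (by decide)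

private lemma pd3_low (j : Fin 8) (hj : j.1 < 3) : pderiv j P3 = 0 := by
  fin_cases j
  · exact pd3_0
  · exact pd3_1
  · exact pd3_2
  all_goals exact absurd hj (by decide)

private lemma row2_0 : ∑ j : Fin 8, rotorBk 0 j * pderiv j P2 = 0 := by
  simp only [Fin.sum_univ_eight, pd2_0, pd2_1, pd2_2, pd2_3, pd2_4, pd2_5, pd2_6, pd2_7,
    bk03, bk04, bk05, bk06, bk07]
  ring

private lemma row2_1 : ∑ j : Fin 8, rotorBk 1 j * pderiv j P2 = 0 := by
  simp only [Fin.sum_univ_eight, pd2_0, pd2_1, pd2_2, pd2_3, pd2_4, pd2_5, pd2_6, pd2_7,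
    bk13, bk14, bk15, bk16, bk17]
  ring

private lemma row2_2 : ∑ j : Fin 8, rotorBk 2 j * pderiv j P2 = 0 := by
  simp only [Fin.sum_univ_eight, pd2_0, pd2_1, pd2_2, pd2_3, pd2_4, pd2_5, pd2_6, pd2_7,
    bk23, bk24, bk25, bk26, bk27]
  ring

private lemma row3_0 : ∑ j : Fin 8, rotorBk 0 j * pderiv j P3 = 0 := by
  simp only [Fin.sum_univ_eight, pd3_0, pd3_1, pd3_2, pd3_3, pd3_4, pd3_5, pd3_6, pd3_7,
    bk03, bk04, bk05, bk06, bk07]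
  ring

private lemma row3_1 : ∑ j : Fin 8, rotorBk 1 j * pderiv j P3 = 0 := by
  simp only [Fin.sum_univ_eight, pd3_0, pd3_1, pd3_2, pd3_3, pd3_4, pd3_5, pd3_6, pd3_7,
    bk13, bk14, bk15, bk16, bk17]
  ring

private lemma row3_2 : ∑ j : Fin 8, rotorBk 2 j * pderiv j P3 = 0 := by
  simp only [Fin.sum_univ_eight, pd3_0, pd3_1, pd3_2, pd3_3, pd3_4, pd3_5, pd3_6, pd3_7,
    bk23, bk24, bk25, bk26, bk27]
  ring

/- STATEMENT 9: `C₂' = 2 Σ_{i,k} t_{ik}t_{ik}` and `C₃' = Σ_{i,k,l} t_{ik}t_{kl}t_{li}`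
are invariants of the rotor Lie algebra `g = so(3) ⋉ ℝ⁵`. -/
theorem rotor_invariants :
    IsLieInvariant rotorBk (2 * ∑ i : Fin 3, ∑ k : Fin 3, tv i k * tv i k) ∧
    IsLieInvariant rotorBk
      (∑ i : Fin 3, ∑ k : Fin 3, ∑ l : Fin 3, tv i k * tv k l * tv l i) := by
  constructor
  · intro i
    simp only [F2eq]
    fin_cases i
    · exact row2_0
    · exact row2_1
    · exact row2_2
    all_goals exact rowT _ (by decide) _ pd2_low
  · intro i
    simp only [F3eq]
    fin_cases i
    · exact row3_0
    · exact row3_1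
    · exact row3_2
    all_goals exact rowT _ (by decide) _ pd3_low
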